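/- arXiv:1501.06224 — 2 statements merged into one kernel-verified Lean document; each statement's English description precedes it below -/
import Mathlib

section
/- Let Φ be an N-function with l ≤ tΦ'(t)/Φ(t) ≤ m for t > 0 where 1 < l ≤ m < N, and define the Sobolev conjugate Φ⋆ by Φ⋆⁻¹(t) = ∫₀^t Φ⁻¹(s)/s^{(N+1)/N} ds. Then l* ≤ t Φ⋆'(t)/Φ⋆(t) ≤ m* for all t > 0, where l* = lN/(N−l) and m* = mN/(N−m). -/
/-!
The index bounds say that `Φ x / x ^ l` increases and `Φ x / x ^ m` decreases on `(0, ∞)`;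
inverting, `Φ⁻¹ u / u ^ (1/m)` increases and `Φ⁻¹ u / u ^ (1/l)` decreases. With `s = Φ⋆ t` and
`p = (N + 1) / N`, the integrand of `t = ∫₀ˢ Φ⁻¹ u / u ^ p du` is therefore squeezed on `(0, s]`
between the powers `Φ⁻¹ s / s ^ p · (u / s) ^ (1/a - p)`, `a = l, m`, and integrating them gives
`l* A ≤ t ≤ m* A` with `A = s · Φ⁻¹ s / s ^ p`. Differentiating `Φ⋆⁻¹ (Φ⋆ t) = t` gives
`Φ⋆' t = s ^ p / Φ⁻¹ s`, that is `t Φ⋆' t / Φ⋆ t = t / A`.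
-/

open Set Filter intervalIntegral
open Topology MeasureTheory

section PowerGrowth

variable {f f' : ℝ → ℝ} {a : ℝ}

theorem monotoneOn_mul_rpow_neg_of_mul_le_mul_deriv
    (hf : ∀ t, 0 < t → HasDerivAt f (f' t) t) (h : ∀ t, 0 < t → a * f t ≤ t * f' t) :
    MonotoneOn (fun t => f t * t ^ (-a)) (Ioi 0) := by
  have hderiv : ∀ t, 0 < t →
      HasDerivAt (fun t => f t * t ^ (-a)) (f' t * t ^ (-a) + f t * (-a * t ^ (-a - 1))) t :=
    fun t ht => (hf t ht).mul (Real.hasDerivAt_rpow_const (Or.inl ht.ne'))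
  refine monotoneOn_of_deriv_nonneg (convex_Ioi 0)
    (fun t ht => (hderiv t ht).continuousAt.continuousWithinAt)
    (fun t ht => (hderiv t (interior_subset ht)).differentiableAt.differentiableWithinAt)
    fun t ht => ?_
  rw [interior_Ioi] at ht
  have ht : 0 < t := ht
  rw [(hderiv t ht).deriv]
  calc (0 : ℝ) ≤ t ^ (-a - 1) * (t * f' t - a * f t) :=
        mul_nonneg (Real.rpow_nonneg ht.le _) (sub_nonneg.2 (h t ht))
    _ = f' t * t ^ (-a) + f t * (-a * t ^ (-a - 1)) := by
        rw [show -a = -a - 1 + 1 by ring, Real.rpow_add ht, Real.rpow_one]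
        ring_nf

theorem antitoneOn_mul_rpow_neg_of_mul_deriv_le_mul
    (hf : ∀ t, 0 < t → HasDerivAt f (f' t) t) (h : ∀ t, 0 < t → t * f' t ≤ a * f t) :
    AntitoneOn (fun t => f t * t ^ (-a)) (Ioi 0) := by
  have hneg := monotoneOn_mul_rpow_neg_of_mul_le_mul_deriv (f := -f) (f' := -f')
    (fun t ht => (hf t ht).neg) fun t ht => by simpa using h t ht
  intro x hx y hy hxy
  simpa using hneg hx hy hxy

theorem strictMonoOn_of_monotoneOn_mul_rpow_neg (ha : 0 < a) (hpos : ∀ t, 0 < t → 0 < f t)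
    (hf : MonotoneOn (fun t => f t * t ^ (-a)) (Ioi 0)) : StrictMonoOn f (Ioi 0) := by
  have hsplit : ∀ t, 0 < t → f t = f t * t ^ (-a) * t ^ a := fun t ht => by
    rw [mul_assoc, ← Real.rpow_add ht, neg_add_cancel, Real.rpow_zero, mul_one]
  intro x hx y hy hxy
  have hx : 0 < x := hx
  rw [hsplit x hx, hsplit y hy]
  calc f x * x ^ (-a) * x ^ a < f x * x ^ (-a) * y ^ a :=
        mul_lt_mul_of_pos_left (Real.rpow_lt_rpow hx.le hxy ha)
          (mul_pos (hpos x hx) (Real.rpow_pos_of_pos hx _))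
    _ ≤ f y * y ^ (-a) * y ^ a :=
        mul_le_mul_of_nonneg_right (hf hx hy hxy.le) (Real.rpow_nonneg (le_of_lt hy) _)

end PowerGrowth

section Inverse

variable {φ g : ℝ → ℝ}

theorem pos_of_even_of_inverse (heven : ∀ t, φ (-t) = φ t) (h0 : φ 0 = 0)
    (hinv : ∀ t, 0 ≤ t → g (φ t) = t ∧ φ (g t) = t) {u : ℝ} (hu : 0 < u) : 0 < g u := by
  have hφg : φ (g u) = u := (hinv u hu.le).2
  have habs : φ |g u| = u := by
    rcases abs_choice (g u) with h | h <;> rw [h]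
    · exact hφg
    · rw [heven, hφg]
  have hg_eq : |g u| = g u := by
    rw [← (hinv _ (abs_nonneg _)).1, habs]
  refine lt_of_le_of_ne (hg_eq ▸ abs_nonneg _) fun hg0 => hu.ne ?_
  rw [← hφg, ← hg0, h0]

theorem monotoneOn_of_strictMonoOn_rightInverse (hφ : StrictMonoOn φ (Ioi 0))
    (hgpos : ∀ u, 0 < u → 0 < g u) (hφg : ∀ u, 0 < u → φ (g u) = u) :
    MonotoneOn g (Ioi 0) := fun u hu v hv huv =>
  (hφ.le_iff_le (hgpos u hu) (hgpos v hv)).1 (by rwa [hφg u hu, hφg v hv])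

theorem mul_rpow_neg_inv_eq_rpow {a u : ℝ} (ha : a ≠ 0) (hu : 0 < u) (hgu : 0 < g u)
    (hφg : φ (g u) = u) : g u * u ^ (-a⁻¹) = (φ (g u) * g u ^ (-a)) ^ (-a⁻¹) := by
  rw [hφg, Real.mul_rpow hu.le (Real.rpow_nonneg hgu.le _), ← Real.rpow_mul hgu.le, neg_mul_neg,
    mul_inv_cancel₀ ha, Real.rpow_one, mul_comm]

variable {a : ℝ}

theorem monotoneOn_mul_rpow_neg_inv_of_antitoneOn (ha : 0 < a)
    (hφ : AntitoneOn (fun x => φ x * x ^ (-a)) (Ioi 0)) (hg : MonotoneOn g (Ioi 0))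
    (hgpos : ∀ u, 0 < u → 0 < g u) (hφg : ∀ u, 0 < u → φ (g u) = u) :
    MonotoneOn (fun u => g u * u ^ (-a⁻¹)) (Ioi 0) := by
  intro u hu v hv huv
  have hu : 0 < u := hu
  have hv : 0 < v := hv
  simp only [mul_rpow_neg_inv_eq_rpow ha.ne' hu (hgpos u hu) (hφg u hu),
    mul_rpow_neg_inv_eq_rpow ha.ne' hv (hgpos v hv) (hφg v hv)]
  refine Real.rpow_le_rpow_of_nonpos ?_ (hφ (hgpos u hu) (hgpos v hv) (hg hu hv huv))
    (neg_nonpos.2 (inv_nonneg.2 ha.le))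
  rw [hφg v hv]
  exact mul_pos hv (Real.rpow_pos_of_pos (hgpos v hv) _)

theorem antitoneOn_mul_rpow_neg_inv_of_monotoneOn (ha : 0 < a)
    (hφ : MonotoneOn (fun x => φ x * x ^ (-a)) (Ioi 0)) (hg : MonotoneOn g (Ioi 0))
    (hgpos : ∀ u, 0 < u → 0 < g u) (hφg : ∀ u, 0 < u → φ (g u) = u) :
    AntitoneOn (fun u => g u * u ^ (-a⁻¹)) (Ioi 0) := by
  intro u hu v hv huv
  have hu : 0 < u := hu
  have hv : 0 < v := hv
  simp only [mul_rpow_neg_inv_eq_rpow ha.ne' hu (hgpos u hu) (hφg u hu),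
    mul_rpow_neg_inv_eq_rpow ha.ne' hv (hgpos v hv) (hφg v hv)]
  refine Real.rpow_le_rpow_of_nonpos ?_ (hφ (hgpos u hu) (hgpos v hv) (hg hu hv huv))
    (neg_nonpos.2 (inv_nonneg.2 ha.le))
  rw [hφg u hu]
  exact mul_pos hu (Real.rpow_pos_of_pos (hgpos u hu) _)

end Inverse

theorem div_rpow_eq_mul_rpow_neg_mul_rpow (x : ℝ) {u : ℝ} (hu : 0 < u) (b p : ℝ) :
    x / u ^ p = x * u ^ (-b) * u ^ (b - p) := by
  rw [mul_assoc, ← Real.rpow_add hu, show -b + (b - p) = -p by ring, Real.rpow_neg hu.le,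
    div_eq_mul_inv]

theorem neg_one_lt_inv_sub_succ_div {a N : ℝ} (ha : 0 < a) (haN : a < N) :
    -1 < a⁻¹ - (N + 1) / N := by
  have hN : 0 < N := ha.trans haN
  have : N⁻¹ < a⁻¹ := inv_strictAnti₀ ha haN
  rw [add_div, div_self hN.ne', one_div]
  linarith

theorem inv_inv_sub_succ_div_add_one {a N : ℝ} (ha : 0 < a) (haN : a < N) :
    (a⁻¹ - (N + 1) / N + 1)⁻¹ = a * N / (N - a) := by
  have hN : 0 < N := ha.trans haN
  rw [show a⁻¹ - (N + 1) / N + 1 = a⁻¹ - N⁻¹ by field_simp; ring, inv_sub_inv ha.ne' hN.ne',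
    inv_div]

section PowerIntegrals

variable {g : ℝ → ℝ} {b p s : ℝ}

theorem integral_mul_rpow_neg_mul_rpow (x : ℝ) (hs : 0 < s) (hbp : -1 < b - p) :
    ∫ u in (0 : ℝ)..s, x * s ^ (-b) * u ^ (b - p) = s * (x / s ^ p) / (b - p + 1) := by
  have hbp' : b - p + 1 ≠ 0 := by linarith
  rw [intervalIntegral.integral_const_mul, integral_rpow (Or.inl hbp), Real.zero_rpow hbp',
    sub_zero, Real.rpow_add hs, Real.rpow_sub hs, Real.rpow_neg hs.le, Real.rpow_one]
  field_simp

theorem div_rpow_le_of_monotoneOn (hg : MonotoneOn (fun u => g u * u ^ (-b)) (Ioi 0))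
    {u : ℝ} (hu : 0 < u) (hus : u ≤ s) : g u / u ^ p ≤ g s * s ^ (-b) * u ^ (b - p) := by
  rw [div_rpow_eq_mul_rpow_neg_mul_rpow _ hu b p]
  exact mul_le_mul_of_nonneg_right (hg hu (hu.trans_le hus) hus) (Real.rpow_nonneg hu.le _)

theorem le_div_rpow_of_antitoneOn (hg : AntitoneOn (fun u => g u * u ^ (-b)) (Ioi 0))
    {u : ℝ} (hu : 0 < u) (hus : u ≤ s) : g s * s ^ (-b) * u ^ (b - p) ≤ g u / u ^ p := by
  rw [div_rpow_eq_mul_rpow_neg_mul_rpow _ hu b p]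
  exact mul_le_mul_of_nonneg_right (hg hu (hu.trans_le hus) hus) (Real.rpow_nonneg hu.le _)

theorem intervalIntegrable_div_rpow_of_monotoneOn (hs : 0 < s) (hbp : -1 < b - p)
    (hg : MonotoneOn (fun u => g u * u ^ (-b)) (Ioi 0)) (hg0 : ∀ u, 0 < u → 0 ≤ g u)
    (hmeas : AEStronglyMeasurable (fun u => g u / u ^ p) (volume.restrict (Ioi 0))) :
    IntervalIntegrable (fun u => g u / u ^ p) volume 0 s := by
  have hmaj := ((intervalIntegrable_rpow' (a := 0) (b := s) hbp).const_mul (g s * s ^ (-b))).1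
  refine (intervalIntegrable_iff_integrableOn_Ioc_of_le hs.le).2
    (hmaj.mono' (hmeas.mono_set Ioc_subset_Ioi_self) ?_)
  refine (ae_restrict_iff' measurableSet_Ioc).2 (ae_of_all _ fun u hu => ?_)
  rw [Real.norm_of_nonneg (div_nonneg (hg0 u hu.1) (Real.rpow_nonneg hu.1.le _))]
  exact div_rpow_le_of_monotoneOn hg hu.1 hu.2

theorem integral_div_rpow_le_of_monotoneOn (hs : 0 < s) (hbp : -1 < b - p)
    (hg : MonotoneOn (fun u => g u * u ^ (-b)) (Ioi 0))
    (hint : IntervalIntegrable (fun u => g u / u ^ p) volume 0 s) :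
    ∫ u in (0 : ℝ)..s, g u / u ^ p ≤ s * (g s / s ^ p) / (b - p + 1) := by
  rw [← integral_mul_rpow_neg_mul_rpow _ hs hbp]
  exact integral_mono_on_of_le_Ioo hs.le hint ((intervalIntegrable_rpow' hbp).const_mul _)
    fun u hu => div_rpow_le_of_monotoneOn hg hu.1 hu.2.le

theorem le_integral_div_rpow_of_antitoneOn (hs : 0 < s) (hbp : -1 < b - p)
    (hg : AntitoneOn (fun u => g u * u ^ (-b)) (Ioi 0))
    (hint : IntervalIntegrable (fun u => g u / u ^ p) volume 0 s) :
    s * (g s / s ^ p) / (b - p + 1) ≤ ∫ u in (0 : ℝ)..s, g u / u ^ p := by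
  rw [← integral_mul_rpow_neg_mul_rpow _ hs hbp]
  exact integral_mono_on_of_le_Ioo hs.le ((intervalIntegrable_rpow' hbp).const_mul _) hint
    fun u hu => le_div_rpow_of_antitoneOn hg hu.1 hu.2.le

end PowerIntegrals

theorem mul_deriv_eq_one_of_integral_comp_eq {f G : ℝ → ℝ} {G' t : ℝ} (hG : HasDerivAt G G' t)
    (hinv : ∀ᶠ τ in 𝓝 t, ∫ u in (0 : ℝ)..G τ, f u = τ)
    (hint : IntervalIntegrable f volume 0 (G t)) (hmeas : StronglyMeasurableAtFilter f (𝓝 (G t)))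
    (hcont : ContinuousAt f (G t)) : f (G t) * G' = 1 := by
  have hcomp := ((integral_hasDerivAt_right hint hmeas hcont).comp t hG).congr_of_eventuallyEq
    (hinv.mono fun τ hτ => hτ.symm)
  exact hcomp.unique (hasDerivAt_id t)

theorem aestronglyMeasurable_div_rpow_of_monotoneOn {g : ℝ → ℝ} (hg : MonotoneOn g (Ioi 0))
    (p : ℝ) : AEStronglyMeasurable (fun u => g u / u ^ p) (volume.restrict (Ioi 0)) :=
  ((aemeasurable_restrict_of_monotoneOn measurableSet_Ioi hg).div
    (measurable_id.pow_const p).aemeasurable).aestronglyMeasurable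

theorem div_rpow_mul_deriv_eq_one_of_integral_comp_eq {g G : ℝ → ℝ} {G' t p : ℝ}
    (hG : HasDerivAt G G' t) (hGt : 0 < G t)
    (hinv : ∀ᶠ τ in 𝓝 t, ∫ u in (0 : ℝ)..G τ, g u / u ^ p = τ)
    (hint : IntervalIntegrable (fun u => g u / u ^ p) volume 0 (G t))
    (hg : MonotoneOn g (Ioi 0)) (hcont : ContinuousAt g (G t)) : g (G t) / G t ^ p * G' = 1 :=
  mul_deriv_eq_one_of_integral_comp_eq (f := fun u => g u / u ^ p) hG hinv hint
    ⟨Ioi 0, Ioi_mem_nhds hGt, aestronglyMeasurable_div_rpow_of_monotoneOn hg p⟩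
    (hcont.div (Real.continuousAt_rpow_const _ _ (Or.inl hGt.ne'))
      (Real.rpow_pos_of_pos hGt _).ne')

theorem continuousAt_of_monotoneOn_of_leftInverse {φ g : ℝ → ℝ} (hg : MonotoneOn g (Ioi 0))
    (hφpos : ∀ x, 0 < x → 0 < φ x) (hgφ : ∀ x, 0 < x → g (φ x) = x) {s : ℝ} (hs : 0 < s)
    (hgs : 0 < g s) : ContinuousAt g s := by
  refine continuousAt_of_monotoneOn_of_image_mem_nhds hg (Ioi_mem_nhds hs)
    (mem_of_superset (Ioi_mem_nhds hgs) fun x hx => ⟨φ x, hφpos x hx, hgφ x hx⟩)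

theorem index_bounds_of_integral_div_rpow_eq {g : ℝ → ℝ} {l m N s t D : ℝ} (hl : 0 < l)
    (hlN : l < N) (hm : 0 < m) (hmN : m < N) (hs : 0 < s) (hgs : 0 < g s)
    (hgm : MonotoneOn (fun u => g u * u ^ (-m⁻¹)) (Ioi 0))
    (hgl : AntitoneOn (fun u => g u * u ^ (-l⁻¹)) (Ioi 0))
    (hint : IntervalIntegrable (fun u => g u / u ^ ((N + 1) / N)) volume 0 s)
    (ht : ∫ u in (0 : ℝ)..s, g u / u ^ ((N + 1) / N) = t)
    (hD : g s / s ^ ((N + 1) / N) * D = 1) :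
    l * N / (N - l) ≤ t * D / s ∧ t * D / s ≤ m * N / (N - m) := by
  have hupper := ht ▸ integral_div_rpow_le_of_monotoneOn hs
    (neg_one_lt_inv_sub_succ_div hm hmN) hgm hint
  have hlower := ht ▸ le_integral_div_rpow_of_antitoneOn hs
    (neg_one_lt_inv_sub_succ_div hl hlN) hgl hint
  rw [div_eq_mul_inv, inv_inv_sub_succ_div_add_one hm hmN] at hupper
  rw [div_eq_mul_inv, inv_inv_sub_succ_div_add_one hl hlN] at hlower
  have hA : 0 < s * (g s / s ^ ((N + 1) / N)) :=
    mul_pos hs (div_pos hgs (Real.rpow_pos_of_pos hs _))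
  have hratio : t * D / s = t / (s * (g s / s ^ ((N + 1) / N))) := by
    rw [eq_inv_of_mul_eq_one_right hD]
    ring
  rw [hratio, le_div_iff₀ hA, div_le_iff₀ hA]
  constructor <;> linarith

theorem sobolev_conjugate_index_general
    (Φ Φ' Φinv Φstar Φstar' : ℝ → ℝ) (l m N : ℝ)
    (heven : ∀ t : ℝ, Φ (-t) = Φ t)
    (hΦ0 : Φ 0 = 0)
    (hΦpos : ∀ t : ℝ, t ≠ 0 → 0 < Φ t)
    (hderiv : ∀ t : ℝ, 0 < t → HasDerivAt Φ (Φ' t) t)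
    (hl : 1 < l) (hlm : l ≤ m) (hmN : m < N)
    (hidx : ∀ t : ℝ, 0 < t → l ≤ t * Φ' t / Φ t ∧ t * Φ' t / Φ t ≤ m)
    (hinv : ∀ t : ℝ, 0 ≤ t → Φinv (Φ t) = t ∧ Φ (Φinv t) = t)
    (hstar_pos : ∀ t : ℝ, 0 < t → 0 < Φstar t)
    (hstar_inv : ∀ t : ℝ, 0 ≤ t →
      (∫ s in (0:ℝ)..(Φstar t), Φinv s / s ^ ((N + 1) / N)) = t)
    (hstar_deriv : ∀ t : ℝ, 0 < t → HasDerivAt Φstar (Φstar' t) t) :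
    ∀ t : ℝ, 0 < t →
      l * N / (N - l) ≤ t * Φstar' t / Φstar t ∧
      t * Φstar' t / Φstar t ≤ m * N / (N - m) := by
  intro t ht
  have hΦpos' : ∀ x, 0 < x → 0 < Φ x := fun x hx => hΦpos x hx.ne'
  have hΦl : MonotoneOn (fun x => Φ x * x ^ (-l)) (Ioi 0) :=
    monotoneOn_mul_rpow_neg_of_mul_le_mul_deriv hderiv fun x hx =>
      (le_div_iff₀ (hΦpos' x hx)).1 (hidx x hx).1
  have hΦm : AntitoneOn (fun x => Φ x * x ^ (-m)) (Ioi 0) :=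
    antitoneOn_mul_rpow_neg_of_mul_deriv_le_mul hderiv fun x hx =>
      (div_le_iff₀ (hΦpos' x hx)).1 (hidx x hx).2
  have hgpos : ∀ u, 0 < u → 0 < Φinv u := fun u hu => pos_of_even_of_inverse heven hΦ0 hinv hu
  have hΦg : ∀ u, 0 < u → Φ (Φinv u) = u := fun u hu => (hinv u hu.le).2
  have hg : MonotoneOn Φinv (Ioi 0) := monotoneOn_of_strictMonoOn_rightInverse
    (strictMonoOn_of_monotoneOn_mul_rpow_neg (by linarith) hΦpos' hΦl) hgpos hΦg
  have hgm := monotoneOn_mul_rpow_neg_inv_of_antitoneOn (by linarith) hΦm hg hgpos hΦg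
  have hgl := antitoneOn_mul_rpow_neg_inv_of_monotoneOn (by linarith) hΦl hg hgpos hΦg
  have hs : 0 < Φstar t := hstar_pos t ht
  have hint := intervalIntegrable_div_rpow_of_monotoneOn hs
    (neg_one_lt_inv_sub_succ_div (by linarith) hmN) hgm (fun u hu => (hgpos u hu).le)
    (aestronglyMeasurable_div_rpow_of_monotoneOn hg _)
  have hD := div_rpow_mul_deriv_eq_one_of_integral_comp_eq (hstar_deriv t ht) hs
    (eventually_of_mem (Ioi_mem_nhds ht) fun τ hτ => hstar_inv τ hτ.le) hint hg
    (continuousAt_of_monotoneOn_of_leftInverse hg hΦpos' (fun x hx => (hinv x hx.le).1) hs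
      (hgpos _ hs))
  exact index_bounds_of_integral_div_rpow_eq (by linarith) (by linarith) (by linarith) hmN hs
    (hgpos _ hs) hgm hgl hint (hstar_inv t ht.le) hD

theorem sobolev_conjugate_index
    (Φ Φ' Φinv Φstar Φstar' : ℝ → ℝ) (l m N : ℝ)
    (hconv : ConvexOn ℝ univ Φ)
    (heven : ∀ t : ℝ, Φ (-t) = Φ t)
    (hΦ0 : Φ 0 = 0)
    (hΦpos : ∀ t : ℝ, t ≠ 0 → 0 < Φ t)
    (hlim0 : Tendsto (fun t => Φ t / t) (nhdsWithin 0 (Ioi 0)) (nhds 0))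
    (hliminf : Tendsto (fun t => Φ t / t) atTop atTop)
    (hderiv : ∀ t : ℝ, 0 < t → HasDerivAt Φ (Φ' t) t)
    (hl : 1 < l) (hlm : l ≤ m) (hmN : m < N)
    (hidx : ∀ t : ℝ, 0 < t → l ≤ t * Φ' t / Φ t ∧ t * Φ' t / Φ t ≤ m)
    (hinv : ∀ t : ℝ, 0 ≤ t → Φinv (Φ t) = t ∧ Φ (Φinv t) = t)
    (hstar_pos : ∀ t : ℝ, 0 < t → 0 < Φstar t)
    (hstar_inv : ∀ t : ℝ, 0 ≤ t →
      (∫ s in (0:ℝ)..(Φstar t), Φinv s / s ^ ((N + 1) / N)) = t)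
    (hstar_deriv : ∀ t : ℝ, 0 < t → HasDerivAt Φstar (Φstar' t) t) :
    ∀ t : ℝ, 0 < t →
      l * N / (N - l) ≤ t * Φstar' t / Φstar t ∧
      t * Φstar' t / Φstar t ≤ m * N / (N - m) :=
  sobolev_conjugate_index_general Φ Φ' Φinv Φstar Φstar' l m N heven hΦ0 hΦpos hderiv hl hlm hmN
    hidx hinv hstar_pos hstar_inv hstar_deriv
end

section
/- Let Φ(t) = |t|^p ln(1+|t|) with 1 < p₀ < p < N−1 where p₀ = (−1+√(1+4N))/2, and φ(t) = Φ'(t)/t for t > 0. Then p ≤ φ(t)t²/Φ(t) ≤ p+1 for all t > 0, i.e. Φ satisfies (φ₂) with l = p and m = p+1. -/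
/-!
Since `Φ'(t) t = p Φ(t) + t^{p+1}/(1+t)`, the index is `φ(t)t²/Φ(t) = p + t / ((1+t) log(1+t))`
for `t > 0`. The correction term is positive, and it is at most `1` because
`t/(1+t) = 1 - (1+t)⁻¹ ≤ log(1+t)`.
-/

open Real

lemma div_one_add_le_log_one_add {t : ℝ} (ht : -1 < t) : t / (1 + t) ≤ log (1 + t) := by
  have h := one_sub_inv_le_log_of_pos (x := 1 + t) (by linarith)
  have h1t : 1 + t ≠ 0 := by linarith
  calc t / (1 + t) = 1 - (1 + t)⁻¹ := by field_simp; ring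
    _ ≤ log (1 + t) := h

lemma rpow_log_one_add_index_eq {p t : ℝ} (ht : 0 < t) :
    (p * t ^ (p - 1) * log (1 + t) + t ^ p / (1 + t)) * t / (t ^ p * log (1 + t))
      = p + t / ((1 + t) * log (1 + t)) := by
  have hlog : 0 < log (1 + t) := log_pos (by linarith)
  have htp : 0 < t ^ p := rpow_pos_of_pos ht p
  rw [rpow_sub_one ht.ne']
  field_simp

lemma div_one_add_mul_log_one_add_le_one {t : ℝ} (ht : 0 < t) :
    t / ((1 + t) * log (1 + t)) ≤ 1 := by
  have hlog : 0 < log (1 + t) := log_pos (by linarith)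
  rw [div_le_one (by positivity), ← div_le_iff₀' (by linarith)]
  exact div_one_add_le_log_one_add (by linarith)

theorem plasticity_model_general
    (p : ℝ)
    (Φ : ℝ → ℝ)
    (hΦ : ∀ t : ℝ, Φ t = |t| ^ p * Real.log (1 + |t|))
    (φ : ℝ → ℝ)
    (hφ : ∀ t : ℝ, 0 < t →
      φ t * t = p * t ^ (p - 1) * Real.log (1 + t) + t ^ p / (1 + t)) :
    ∀ t : ℝ, 0 < t →
      p ≤ φ t * t ^ 2 / Φ t ∧ φ t * t ^ 2 / Φ t ≤ p + 1 := by
  intro t ht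
  have hindex : φ t * t ^ 2 / Φ t = p + t / ((1 + t) * log (1 + t)) := by
    rw [hΦ t, abs_of_pos ht, sq, ← mul_assoc, hφ t ht, rpow_log_one_add_index_eq ht]
  have hcorr : 0 < t / ((1 + t) * log (1 + t)) := by
    have : 0 < log (1 + t) := log_pos (by linarith)
    positivity
  rw [hindex]
  exact ⟨by linarith, by linarith [div_one_add_mul_log_one_add_le_one ht]⟩

theorem plasticity_model
    (N : ℕ) (p : ℝ) (hN : 2 ≤ N)
    (hp0 : (-1 + Real.sqrt (1 + 4 * N)) / 2 < p)
    (hp1 : 1 < (-1 + Real.sqrt (1 + 4 * N)) / 2)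
    (hpN : p < (N : ℝ) - 1)
    (Φ : ℝ → ℝ)
    (hΦ : ∀ t : ℝ, Φ t = |t| ^ p * Real.log (1 + |t|))
    (φ : ℝ → ℝ)
    (hφ : ∀ t : ℝ, 0 < t →
      φ t * t = p * t ^ (p - 1) * Real.log (1 + t) + t ^ p / (1 + t)) :
    ∀ t : ℝ, 0 < t →
      p ≤ φ t * t ^ 2 / Φ t ∧ φ t * t ^ 2 / Φ t ≤ p + 1 :=
  plasticity_model_general p Φ hΦ φ hφ
end
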